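/- Let 𝒜 be a C*-algebra and let L be an exponentially positive bounded ℝ-linear operator on 𝒜_sa, i.e. exp(tL) is positive for all t ≥ 0. Then L is cross positive: φ(Lx) ≥ 0 whenever x ∈ (𝒜_sa)_+ and φ is a positive bounded ℝ-linear functional on 𝒜_sa with φ(x) = 0. -/

import Mathlib

open scoped ENNReal

variable {A : Type*} [NonUnitalCStarAlgebra A] [PartialOrder A] [StarOrderedRing A]

noncomputable instance : NormedSpace ℝ (selfAdjoint A) where
  norm_smul_le r x := norm_smul_le r (x : A)

instance : CompleteSpace (selfAdjoint A) :=
  (isClosed_eq continuous_star continuous_id).completeSpace_coe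

/-- A bounded real-linear operator on the self-adjoint part of a C*-algebra is *positive*
if it maps the positive cone into itself. -/
def IsPositiveOp (L : selfAdjoint A →L[ℝ] selfAdjoint A) : Prop :=
  ∀ x : selfAdjoint A, 0 ≤ x → 0 ≤ L x

/-- `L` is *quasi-positive* if `L + α • id` is positive for some `α ≥ 0`. -/
def IsQuasiPositiveOp (L : selfAdjoint A →L[ℝ] selfAdjoint A) : Prop :=
  ∃ α : ℝ, 0 ≤ α ∧ IsPositiveOp (L + α • ContinuousLinearMap.id ℝ (selfAdjoint A))

/-- `L` is *exponentially positive* if `exp (t • L)` is positive for all `t ≥ 0`. -/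
def IsExpPositiveOp (L : selfAdjoint A →L[ℝ] selfAdjoint A) : Prop :=
  ∀ t : ℝ, 0 ≤ t → IsPositiveOp (@NormedSpace.exp _ _ _ (@NonUnitalSeminormedRing.toIsTopologicalRing _
    (ContinuousLinearMap.toNormedRing (𝕜 := ℝ) (E := selfAdjoint A)).toNonUnitalNormedRing.toNonUnitalSeminormedRing)
    (t • L))

/-- `L` is *cross positive* if `φ (L x) ≥ 0` whenever `x ≥ 0` and `φ` is a positive bounded
functional with `φ x = 0`. -/
def IsCrossPositiveOp (L : selfAdjoint A →L[ℝ] selfAdjoint A) : Prop :=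
  ∀ (x : selfAdjoint A) (φ : selfAdjoint A →L[ℝ] ℝ), 0 ≤ x →
    (∀ y : selfAdjoint A, 0 ≤ y → 0 ≤ φ y) → φ x = 0 → 0 ≤ φ (L x)

/-!
Fix `x ≥ 0` and a positive functional `φ` with `φ x = 0`. The real function
`t ↦ φ (exp (t • L) x)` is nonnegative for `t ≥ 0` and vanishes at `0`, so it attains its minimum
over `[0, ∞)` at the endpoint `0`; hence its right derivative there, which is `φ (L x)`, is
nonnegative.
-/

open Set

theorem IsMinOn.hasDerivWithinAt_Ici_nonneg {f : ℝ → ℝ} {f' a : ℝ} (hmin : IsMinOn f (Ici a) a)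
    (hf : HasDerivWithinAt f f' (Ici a) a) : 0 ≤ f' := by
  have hone : (1 : ℝ) ∈ posTangentConeAt (Ici a) a :=
    mem_posTangentConeAt_of_segment_subset
      ((segment_subset_Icc (by simp)).trans Icc_subset_Ici_self)
  simpa using hmin.localize.hasFDerivWithinAt_nonneg hf.hasFDerivWithinAt hone

section ExpOrbit

variable {E : Type*} [NormedAddCommGroup E] [NormedSpace ℝ E] [CompleteSpace E]

theorem hasDerivAt_exp_smul_apply (L : E →L[ℝ] E) (x : E) (t : ℝ) :
    HasDerivAt (fun s : ℝ => NormedSpace.exp (s • L) x) (NormedSpace.exp (t • L) (L x)) t := by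
  simpa only [Function.comp_def, ContinuousLinearMap.apply_apply, mul_apply_eq_comp] using
    (ContinuousLinearMap.apply ℝ E x).hasFDerivAt.comp_hasDerivAt t (hasDerivAt_exp_smul_const L t)

theorem nonneg_apply_of_nonneg_apply_exp_smul {L : E →L[ℝ] E} {x : E} {φ : E →L[ℝ] ℝ}
    (hφx : φ x = 0) (horbit : ∀ t : ℝ, 0 ≤ t → 0 ≤ φ (NormedSpace.exp (t • L) x)) :
    0 ≤ φ (L x) := by
  have hmin : IsMinOn (fun t : ℝ => φ (NormedSpace.exp (t • L) x)) (Ici 0) 0 := fun t ht => by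
    simpa [hφx] using horbit t ht
  have hderiv := φ.hasFDerivAt.comp_hasDerivAt 0 (hasDerivAt_exp_smul_apply L x 0)
  simpa using hmin.hasDerivWithinAt_Ici_nonneg hderiv.hasDerivWithinAt

end ExpOrbit

/-- On the self-adjoint part of a C*-algebra, every exponentially positive bounded real-linear
operator is cross positive. -/
theorem crossPositive_of_expPositive
    (L : selfAdjoint A →L[ℝ] selfAdjoint A) (hL : IsExpPositiveOp L) :
    IsCrossPositiveOp L :=
  fun x _ hx hφ hφx => nonneg_apply_of_nonneg_apply_exp_smul hφx fun t ht => hφ _ (hL t ht x hx)
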